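/- Let q be a prime power, m a positive even integer. For every u in the set M = {1} ∪ {q^ℓ + 1 : 0 < ℓ < m/2}, the smallest positive integer m_u ≤ m with q^{m_u} · u ≡ u (mod q^m - 1) is m_u = m. -/

import Mathlib

/-! Modulo `q ^ m - 1` one has `q ^ m ≡ 1`, so exponents of `q` may be reduced modulo `m`.
If `q ^ t * (q ^ ℓ + 1) ≡ q ^ ℓ + 1` with `0 < t < m`, reducing the exponent of `q ^ (t + ℓ)`
turns both sides into sums of two distinct powers of `q` with exponents below `m`, hence into
numbers below `q ^ m - 1`, so the congruence is an equality of base-`q` expansions. That forces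
`t = ℓ` and `t + ℓ ≡ 0 (mod m)`, impossible when `0 < 2ℓ < m`. For `u = 1` the same size
argument gives `q ^ t = 1`. -/

namespace Nat

theorem pow_modEq_pow_mod {q : ℕ} (hq : 0 < q) (m n : ℕ) :
    q ^ n ≡ q ^ (n % m) [MOD q ^ m - 1] := by
  have hqm : q ^ m ≡ 1 [MOD q ^ m - 1] :=
    ((modEq_iff_dvd' (one_le_pow m q hq)).mpr dvd_rfl).symm
  calc q ^ n = (q ^ m) ^ (n / m) * q ^ (n % m) := by
        rw [← pow_mul, ← pow_add, div_add_mod]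
    _ ≡ 1 ^ (n / m) * q ^ (n % m) [MOD q ^ m - 1] := (hqm.pow _).mul_right _
    _ = q ^ (n % m) := by rw [one_pow, one_mul]

theorem pow_lt_pow_sub_one {q m t : ℕ} (hq : 2 ≤ q) (ht : 0 < t) (htm : t < m) :
    q ^ t < q ^ m - 1 := by
  have h2 : 2 ≤ q ^ t := hq.trans (le_self_pow ht.ne' q)
  have hmul : q ^ t * 2 ≤ q ^ m :=
    calc q ^ t * 2 ≤ q ^ t * q := Nat.mul_le_mul_left _ hq
      _ = q ^ (t + 1) := (pow_succ q t).symm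
      _ ≤ q ^ m := pow_le_pow_right₀ (by omega) htm
  omega

theorem pow_add_pow_lt_pow_sub_one {q m s r : ℕ} (hq : 2 ≤ q) (hm : 3 ≤ m) (hs : s < m)
    (hr : r < m) (hsr : s ≠ r) : q ^ s + q ^ r < q ^ m - 1 := by
  wlog hlt : s < r generalizing s r
  · rw [add_comm]; exact this hr hs hsr.symm (by omega)
  have hs' : q ^ s ≤ q ^ (m - 2) := pow_le_pow_right₀ (by omega) (by omega)
  have hr' : q ^ r ≤ q ^ (m - 1) := pow_le_pow_right₀ (by omega) (by omega)
  have h2 : 2 ≤ q ^ (m - 2) := hq.trans (le_self_pow (by omega) q)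
  have hdecomp : q ^ m = q ^ (m - 2) * q ^ 2 := by rw [← pow_add]; congr 1; omega
  have hpred : q ^ (m - 1) = q ^ (m - 2) * q := by rw [← pow_succ]; congr 1; omega
  have hq2 : q + 2 ≤ q ^ 2 := by nlinarith
  have hlower : q ^ (m - 2) * (q + 2) ≤ q ^ m := hdecomp ▸ Nat.mul_le_mul_left _ hq2
  rw [Nat.lt_sub_iff_add_lt]
  linarith

theorem eq_zero_and_eq_of_pow_add_pow_eq_pow_add_one {q a t ℓ : ℕ} (hq : 2 ≤ q) (ht : 0 < t)
    (hℓ : 0 < ℓ) (h : q ^ a + q ^ t = q ^ ℓ + 1) : a = 0 ∧ t = ℓ := by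
  obtain rfl : a = 0 := by
    by_contra ha
    have hdvd : q ∣ q ^ ℓ + 1 := h ▸ (dvd_pow_self q ha).add (dvd_pow_self q ht.ne')
    have hone : q ∣ 1 := (Nat.dvd_add_right (dvd_pow_self q hℓ.ne')).mp hdvd
    exact absurd (le_of_dvd one_pos hone) (by omega)
  rw [pow_zero, add_comm] at h
  exact ⟨rfl, Nat.pow_right_injective hq (Nat.add_right_cancel h)⟩

theorem not_pow_modEq_one {q m t : ℕ} (hq : 2 ≤ q) (ht : 0 < t) (htm : t < m) :
    ¬ q ^ t ≡ 1 [MOD q ^ m - 1] := by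
  intro h
  have hlt : q ^ t < q ^ m - 1 := pow_lt_pow_sub_one hq ht htm
  have hgt : 1 < q ^ t := Nat.one_lt_pow ht.ne' (by omega)
  exact hgt.ne' (h.eq_of_lt_of_lt hlt (hgt.trans hlt))

theorem not_pow_mul_pow_add_one_modEq {q m t ℓ : ℕ} (hq : 2 ≤ q) (hℓ : 0 < ℓ) (hℓm : 2 * ℓ < m)
    (ht : 0 < t) (htm : t < m) : ¬ q ^ t * (q ^ ℓ + 1) ≡ q ^ ℓ + 1 [MOD q ^ m - 1] := by
  intro h
  set a := (t + ℓ) % m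
  have ha : a < m := mod_lt _ (by omega)
  have hat : a ≠ t := by
    intro hat
    have hcong : t + ℓ ≡ t + 0 [MOD m] := by rw [ModEq, add_zero, mod_eq_of_lt htm]; exact hat
    exact absurd (le_of_dvd hℓ (modEq_zero_iff_dvd.mp (hcong.add_left_cancel' t))) (by omega)
  have hmod : q ^ a + q ^ t ≡ q ^ ℓ + 1 [MOD q ^ m - 1] :=
    calc q ^ a + q ^ t ≡ q ^ (t + ℓ) + q ^ t [MOD q ^ m - 1] :=
          (pow_modEq_pow_mod (by omega) m _).symm.add_right _
      _ = q ^ t * (q ^ ℓ + 1) := by ring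
      _ ≡ q ^ ℓ + 1 [MOD q ^ m - 1] := h
  have hlhs : q ^ a + q ^ t < q ^ m - 1 := pow_add_pow_lt_pow_sub_one hq (by omega) ha htm hat
  have hrhs : q ^ ℓ + 1 < q ^ m - 1 := by
    simpa using pow_add_pow_lt_pow_sub_one (r := 0) hq (by omega) (by omega) (by omega) hℓ.ne'
  obtain ⟨ha0, rfl⟩ :=
    eq_zero_and_eq_of_pow_add_pow_eq_pow_add_one hq ht hℓ (hmod.eq_of_lt_of_lt hlhs hrhs)
  rw [show a = 2 * t % m by simp only [a]; ring_nf, mod_eq_of_lt hℓm] at ha0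
  omega

end Nat

theorem stmt_4_general (q m : ℕ) (hq : IsPrimePow q) (hm : 0 < m)
    (u : ℕ) (hu : u = 1 ∨ ∃ ℓ, 0 < ℓ ∧ ℓ < m / 2 ∧ u = q ^ ℓ + 1) :
    IsLeast {t : ℕ | 0 < t ∧ q ^ t * u ≡ u [MOD q ^ m - 1]} m := by
  have hq2 : 2 ≤ q := hq.two_le
  refine ⟨⟨hm, ?_⟩, fun t ⟨ht, hmod⟩ => not_lt.mp fun htm => ?_⟩
  · simpa using (Nat.pow_modEq_pow_mod (by omega) m m).mul_right u
  rcases hu with rfl | ⟨ℓ, hℓ, hℓm, rfl⟩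
  · exact Nat.not_pow_modEq_one hq2 ht htm (by simpa using hmod)
  · exact Nat.not_pow_mul_pow_add_one_modEq hq2 hℓ (by omega) ht htm hmod

/-- For u ∈ M = {1} ∪ {q^ℓ+1 : 0 < ℓ < m/2}, the q-cyclotomic coset of u mod q^m-1
has full size m: the least positive t with q^t·u ≡ u (mod q^m-1) is m. -/
theorem stmt_4 (q m : ℕ) (hq : IsPrimePow q) (hm : 0 < m) (hme : Even m)
    (u : ℕ) (hu : u = 1 ∨ ∃ ℓ, 0 < ℓ ∧ ℓ < m / 2 ∧ u = q ^ ℓ + 1) :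
    IsLeast {t : ℕ | 0 < t ∧ q ^ t * u ≡ u [MOD q ^ m - 1]} m :=
  stmt_4_general q m hq hm u hu
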